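/- Let T ∈ IGLT(λ)_m with λ a two-row partition, and suppose i occurs exactly once in row 1 of T, i+1 occurs exactly once in row 2 of T, and they occupy the same column. Then in S = Φ_{λ;m}(T), the entries i and i+1 lie in the same column, so π_i · S = 0 under Searles' action; in particular π_i · Φ_{λ;m}(T) = 0 = Φ_{λ;m}(π_i · T). -/

import Mathlib

/-- A two-row tableau, given by its two rows (lists of entries). -/
structure TwoRowT where
  r1 : List ℕ
  r2 : List ℕ
deriving DecidableEq

/-- A "hook-plus" tableau: two rows together with the part of the first
column lying below the second row. -/
structure HookT where
  r1 : List ℕ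
  r2 : List ℕ
  col : List ℕ
deriving DecidableEq

/-- `T` is an increasing gapless tableau of shape `(l1,l2)` with maximum entry `m`. -/
def IsIGLT (l1 l2 m : ℕ) (T : TwoRowT) : Prop :=
  T.r1.length = l1 ∧ T.r2.length = l2 ∧
  T.r1.Chain' (· < ·) ∧ T.r2.Chain' (· < ·) ∧
  (∀ j, j < l2 → T.r1.getD j 0 < T.r2.getD j 0) ∧
  (∀ x ∈ T.r1, 1 ≤ x ∧ x ≤ m) ∧ (∀ x ∈ T.r2, 1 ≤ x ∧ x ≤ m) ∧
  (∀ k, 1 ≤ k → k ≤ m → k ∈ T.r1 ∨ k ∈ T.r2) ∧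
  (m ∈ T.r1 ∨ m ∈ T.r2)

/-- The set `A` of repeated entries of a two-row increasing tableau. -/
def setA (T : TwoRowT) : List ℕ := T.r1.filter (fun x => x ∈ T.r2)

/-- The set `B`: entries of the second row immediately to the right of an element of `A`. -/
def setB (T : TwoRowT) : List ℕ :=
  (T.r2.zip T.r2.tail).filterMap (fun p => if p.1 ∈ setA T then some p.2 else none)

/-- Pechenik's map `Φ_{λ;m}`. -/
def Phi (T : TwoRowT) : HookT :=
  ⟨T.r1.filter (fun x => x ∉ setA T),
   T.r2.filter (fun x => x ∉ setB T),
   List.insertionSort (· ≤ ·) (setB T)⟩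

/-- The shape of a hook-plus tableau, as a list. -/
def shapeOf (S : HookT) : List ℕ :=
  S.r1.length :: S.r2.length :: List.replicate S.col.length 1

/-- `S` is a standard Young tableau with entries `1,...,m`. -/
def IsSYTHook (m : ℕ) (S : HookT) : Prop :=
  S.r1.Chain' (· < ·) ∧ S.r2.Chain' (· < ·) ∧
  ((S.r1.take 1) ++ (S.r2.take 1) ++ S.col).Chain' (· < ·) ∧
  (∀ j, j < S.r2.length → S.r1.getD j 0 < S.r2.getD j 0) ∧
  S.r2.length ≤ S.r1.length ∧
  (S.col ≠ [] → S.r2 ≠ []) ∧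
  (S.r1 ++ S.r2 ++ S.col).Perm (List.range' 1 m)

/-- The shape `λ_m^{(1)} = (λ₁-k, λ₂-k, 1^k)`. -/
def lamShape1 (l1 l2 k : ℕ) : List ℕ := [l1 - k, l2 - k] ++ List.replicate k 1

/-- The shape `λ_m^{(2)} = (λ₁-k, λ₂-k+1, 1^(k-1))`. -/
def lamShape2 (l1 l2 k : ℕ) : List ℕ := [l1 - k, l2 - k + 1] ++ List.replicate (k - 1) 1

/-- The set `Par(λ;m)` of shapes occurring in Pechenik's expansion. -/
def ParSet (l1 l2 n m : ℕ) : Set (List ℕ) :=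
  {s | (n - m + 1 < l2 ∨ m = n) ∧ s = lamShape1 l1 l2 (n - m)} ∪
  {s | l1 ≠ l2 ∧ m < n ∧ n - m < l2 ∧ s = lamShape2 l1 l2 (n - m)}

/-- Row index (1-based) of the entry `x` in a hook-plus tableau. -/
def rowIdx (S : HookT) (x : ℕ) : ℕ :=
  if x ∈ S.r1 then 1 else if x ∈ S.r2 then 2 else 3 + S.col.idxOf x

/-- Column index (0-based) of the entry `x` in a hook-plus tableau. -/
def colIdx (S : HookT) (x : ℕ) : ℕ :=
  if x ∈ S.r1 then S.r1.idxOf x else if x ∈ S.r2 then S.r2.idxOf x else 0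

/-- Descent set of an increasing gapless two-row tableau with max entry `m`. -/
def desT (m : ℕ) (T : TwoRowT) : Finset ℕ :=
  (Finset.Ioo 0 m).filter (fun i => i ∈ T.r1 ∧ i + 1 ∈ T.r2)

/-- Descent set of a standard Young tableau with entries `1,...,m`. -/
def desS (m : ℕ) (S : HookT) : Finset ℕ :=
  (Finset.Ioo 0 m).filter (fun i => rowIdx S i < rowIdx S (i + 1))

def swapVal (i j x : ℕ) : ℕ := if x = i then j else if x = j then i else x

/-- Swap the entries `i` and `j` in a two-row tableau. -/
def twoRowSwap (i j : ℕ) (T : TwoRowT) : TwoRowT :=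
  ⟨T.r1.map (swapVal i j), T.r2.map (swapVal i j)⟩

/-- Swap the entries `i` and `j` in a hook-plus tableau. -/
def hookSwap (i j : ℕ) (S : HookT) : HookT :=
  ⟨S.r1.map (swapVal i j), S.r2.map (swapVal i j), S.col.map (swapVal i j)⟩

/-- Searles' 0-Hecke operator `π_i` on a standard Young tableau:
`some S` means the result is `S`, `none` means the result is `0`. -/
def searlesStep (i : ℕ) (S : HookT) : Option HookT :=
  if colIdx S i < colIdx S (i + 1) then some S
  else if colIdx S i = colIdx S (i + 1) then none
  else some (hookSwap i (i + 1) S)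

/-- Kim–Yoo's 0-Hecke operator `π_i` on an increasing gapless tableau. -/
def kyStep (i : ℕ) (T : TwoRowT) : Option TwoRowT :=
  if i ∈ T.r1 ∧ i + 1 ∈ T.r2 then
    if i ∉ T.r2 ∧ i + 1 ∉ T.r1 ∧ T.r2.idxOf (i + 1) < T.r1.idxOf i then
      some (twoRowSwap i (i + 1) T)
    else none
  else some T

/-- Searles' operator, extended linearly. -/
noncomputable def piOp (i : ℕ) : (HookT →₀ ℂ) →ₗ[ℂ] (HookT →₀ ℂ) :=
  Finsupp.lsum ℂ fun S => (searlesStep i S).elim 0 fun S' => Finsupp.lsingle S'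

/-- Kim–Yoo's operator, extended linearly. -/
noncomputable def kyOp (i : ℕ) : (TwoRowT →₀ ℂ) →ₗ[ℂ] (TwoRowT →₀ ℂ) :=
  Finsupp.lsum ℂ fun T => (kyStep i T).elim 0 fun T' => Finsupp.lsingle T'

/-- The data of the boxes occupied by repeated entries: for each repeated entry `i`,
the pair of (0-based) columns of its occurrence in row 1 and in row 2.
For two-row shapes this datum determines the pair `(Γ_i(T), T⁻¹(i))`. -/
def repPairs (T : TwoRowT) : Set (ℕ × ℕ) :=
  {p | ∃ i, i ∈ T.r1 ∧ i ∈ T.r2 ∧ p = (T.r1.idxOf i, T.r2.idxOf i)}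

/-- The Kim–Yoo equivalence `∼_{λ;m}` on two-row increasing gapless tableaux. -/
def equivKY (T1 T2 : TwoRowT) : Prop := repPairs T1 = repPairs T2

/-- The equivalence class of `T` in `IGLT(λ)_m` under `∼_{λ;m}`. -/
def classOf (l1 l2 m : ℕ) (T : TwoRowT) : Set TwoRowT :=
  {T' | IsIGLT l1 l2 m T' ∧ equivKY T T'}

/-- The columns (0-based) of the bottommost boxes of the repeated entries,
listed in increasing order of the repeated entries. -/
def botCols (T : TwoRowT) : List ℕ :=
  (T.r1.filter (fun x => x ∈ T.r2)).map (fun i => T.r2.idxOf i)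

/-- The partial order `⪯` on equivalence classes. -/
def classLE (C1 C2 : Set TwoRowT) : Prop :=
  ∃ T1 ∈ C1, ∃ T2 ∈ C2, List.Forall₂ (· ≤ ·) (botCols T1) (botCols T2)

open Classical in
/-- The fundamental quasisymmetric function `F_{comp(D)}` of degree `m`,
as a formal power series in the variables `x_0, x_1, x_2, ...`. -/
noncomputable def Fqs (m : ℕ) (D : Finset ℕ) : MvPowerSeries ℕ ℚ :=
  fun e =>
    if ∃ f : Fin m → ℕ, Monotone f ∧
        (∀ j : ℕ, ∀ hj : j < m, 0 < j → j ∈ D → f ⟨j - 1, by omega⟩ < f ⟨j, hj⟩) ∧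
        (∀ i : ℕ, e i = Nat.card {j : Fin m // f j = i})
    then 1 else 0

/-- The Schur function `s_μ = Σ_{S ∈ SYT(μ)} F_{comp(Des(S))}` (for shapes
representable as hook-plus tableaux). -/
noncomputable def schurF (m : ℕ) (μ : List ℕ) : MvPowerSeries ℕ ℚ :=
  ∑ᶠ S ∈ {S : HookT | IsSYTHook m S ∧ shapeOf S = μ}, Fqs m (desS m S)


private lemma sorted_indexOf {l : List ℕ} (hs : l.Pairwise (· < ·)) {x : ℕ} (hx : x ∈ l) :
    l.idxOf x = l.countP (fun v => v < x) := by
  induction l with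
  | nil => simp at hx
  | cons a t ih =>
    rw [List.pairwise_cons] at hs
    rcases List.mem_cons.mp hx with rfl | hxt
    · have h0 : List.countP (fun v => decide (v < x)) t = 0 :=
        List.countP_eq_zero.mpr (fun b hbt => by
          simp only [decide_eq_true_eq]
          exact Nat.not_lt.mpr (le_of_lt (hs.1 b hbt)))
      rw [List.idxOf_cons_self, List.countP_cons, h0]
      simp
    · have hax : a < x := hs.1 x hxt
      rw [List.idxOf_cons_ne _ (Nat.ne_of_lt hax), List.countP_cons, ih hs.2 hxt]
      simp [hax]

private lemma sorted_indexOf_lt {l : List ℕ} (hs : l.Pairwise (· < ·)) {x y : ℕ}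
    (hx : x ∈ l) (hy : y ∈ l) (hxy : x < y) : l.idxOf x < l.idxOf y := by
  induction l with
  | nil => simp at hx
  | cons a t ih =>
    rw [List.pairwise_cons] at hs
    rcases List.mem_cons.mp hx with rfl | hxt
    · rw [List.idxOf_cons_self, List.idxOf_cons_ne _ (Nat.ne_of_lt hxy)]
      exact Nat.succ_pos _
    · have hax : a < x := hs.1 x hxt
      have hyt : y ∈ t := by
        rcases List.mem_cons.mp hy with rfl | h
        · omega
        · exact h
      rw [List.idxOf_cons_ne _ (Nat.ne_of_lt hax),
          List.idxOf_cons_ne _ (Nat.ne_of_lt (lt_trans hax hxy))]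
      exact Nat.succ_lt_succ (ih hs.2 hxt hyt)

private lemma nodup_of_sorted {l : List ℕ} (hs : l.Pairwise (· < ·)) : l.Nodup :=
  hs.imp (fun h => Nat.ne_of_lt h)

private lemma indexOf_getElem' {l : List ℕ} (hn : l.Nodup) {r : ℕ} (h : r < l.length) :
    l.idxOf l[r] = r := by
  have hm : l[r] ∈ l := List.getElem_mem h
  have hlt : l.idxOf l[r] < l.length := List.idxOf_lt_length_iff.mpr hm
  exact (hn.getElem_inj_iff).mp (List.getElem_idxOf hlt)

private lemma mem_zip_tail {l : List ℕ} {u v : ℕ} :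
    (u, v) ∈ l.zip l.tail ↔ ∃ q, ∃ h : q + 1 < l.length, l[q] = u ∧ l[q+1] = v := by
  constructor
  · intro h
    obtain ⟨q, hq, hget⟩ := List.mem_iff_getElem.mp h
    have htl : l.tail.length = l.length - 1 := List.length_tail
    have hq2 : q < min l.length l.tail.length := by simpa [List.length_zip] using hq
    have hq' : q < l.tail.length := by omega
    have h1 : q + 1 < l.length := by omega
    rw [List.getElem_zip, Prod.mk.injEq] at hget
    obtain ⟨e1, e2⟩ := hget
    rw [List.getElem_tail] at e2
    exact ⟨q, h1, e1, e2⟩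
  · rintro ⟨q, h, rfl, rfl⟩
    apply List.mem_iff_getElem.mpr
    have htl : l.tail.length = l.length - 1 := List.length_tail
    have hq' : q < l.tail.length := by omega
    refine ⟨q, by simp [List.length_zip]; omega, ?_⟩
    rw [List.getElem_zip]
    rw [List.getElem_tail hq']

private lemma zip_tail_eq : ∀ (l : List ℕ), l.zip l.tail = l.dropLast.zip l.tail
  | [] => rfl
  | [_] => rfl
  | a :: b :: t => by
    have ih := zip_tail_eq (b :: t)
    simp only [List.tail_cons] at ih ⊢
    simp only [List.zip_cons_cons, List.dropLast_cons₂]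
    rw [ih]

private lemma countP_and_split (l : List ℕ) (p q : ℕ → Bool) :
    l.countP (fun v => p v && q v) + l.countP (fun v => p v && !q v) = l.countP p := by
  induction l with
  | nil => simp
  | cons a t ih =>
    simp only [List.countP_cons]
    cases hpa : p a <;> cases hqa : q a <;> simp [hpa, hqa] <;> omega

private lemma countP_comm_mem (l l' : List ℕ) (hl : l.Nodup) (hl' : l'.Nodup) (c : ℕ) :
    l.countP (fun v => decide (v < c) && decide (v ∈ l')) =
    l'.countP (fun v => decide (v < c) && decide (v ∈ l)) := by
  have h1 : ∀ (a b : List ℕ), a.Nodup →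
      a.countP (fun v => decide (v < c) && decide (v ∈ b)) =
      ((a.toFinset ∩ b.toFinset).filter (· < c)).card := by
    intro a b hna
    rw [List.countP_eq_length_filter, ← List.toFinset_card_of_nodup (hna.filter _),
        List.toFinset_filter]
    congr 1
    ext v
    simp only [Finset.mem_filter, Finset.mem_inter, List.mem_toFinset, Bool.and_eq_true,
      decide_eq_true_eq]
    tauto
  rw [h1 _ _ hl, h1 _ _ hl', Finset.inter_comm]

section MainWork
variable {T : TwoRowT}

private lemma mem_setA_iff (T : TwoRowT) (v : ℕ) : v ∈ setA T ↔ v ∈ T.r1 ∧ v ∈ T.r2 := by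
  simp [setA]

private lemma mem_setB_iff (T : TwoRowT) (v : ℕ) :
    v ∈ setB T ↔ ∃ r, ∃ _h : r + 1 < T.r2.length, T.r2[r] ∈ setA T ∧ T.r2[r+1] = v := by
  constructor
  · intro h
    rw [setB, List.mem_filterMap] at h
    obtain ⟨pr, hpr, hf⟩ := h
    obtain ⟨u, w⟩ := pr
    by_cases hA : u ∈ setA T
    · rw [if_pos hA] at hf
      obtain ⟨r, hr, e1, e2⟩ := mem_zip_tail.mp hpr
      exact ⟨r, hr, e1 ▸ hA, by rw [e2]; exact Option.some.inj hf⟩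
    · rw [if_neg hA] at hf; exact absurd hf (by simp)
  · rintro ⟨r, hr, hA, he⟩
    rw [setB, List.mem_filterMap]
    refine ⟨(T.r2[r], T.r2[r+1]), mem_zip_tail.mpr ⟨r, hr, rfl, rfl⟩, ?_⟩
    rw [if_pos hA, he]

end MainWork

private lemma main_col (l1 l2 m : ℕ)
    (T : TwoRowT) (hT : IsIGLT l1 l2 m T)
    (i : ℕ)
    (ha : i ∈ T.r1) (hb : i ∉ T.r2) (hc : i + 1 ∈ T.r2) (hd : i + 1 ∉ T.r1)
    (hcol : T.r1.idxOf i = T.r2.idxOf (i + 1)) :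
    colIdx (Phi T) i = colIdx (Phi T) (i + 1) := by
  obtain ⟨hl1, hl2, hc1, hc2, hcs, hb1, hb2, hgap, hmm⟩ := hT
  have hs1 : T.r1.Pairwise (· < ·) := List.isChain_iff_pairwise.mp hc1
  have hs2 : T.r2.Pairwise (· < ·) := List.isChain_iff_pairwise.mp hc2
  have hn1 : T.r1.Nodup := nodup_of_sorted hs1
  have hn2 : T.r2.Nodup := nodup_of_sorted hs2
  have hg2 : ∀ (r s : ℕ), ∀ _hr : r < T.r2.length, ∀ _hs : s < T.r2.length,
      r < s → T.r2[r] < T.r2[s] :=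
    fun r s hr hs hrs => List.pairwise_iff_getElem.mp hs2 r s hr hs hrs
  set q := T.r2.idxOf (i+1) with hqdef
  set p := T.r1.idxOf i with hpdef
  -- hcol : p = q
  have hqlt : q < T.r2.length := List.idxOf_lt_length_iff.mpr hc
  have hplt : p < T.r1.length := List.idxOf_lt_length_iff.mpr ha
  have hr2q : T.r2[q] = i + 1 := List.getElem_idxOf hqlt
  have hr1p : T.r1[p] = i := List.getElem_idxOf hplt
  have hAi : i ∉ setA T := fun h => hb ((mem_setA_iff T i).mp h).2
  -- the entry just before i+1 in row 2 is not a repeated entry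
  have haprev : ∀ r, ∀ _hrq : r + 1 = q, T.r2[r]'(by omega) ∉ setA T := by
    intro r hrq hmem
    have hrlt : r < T.r2.length := by omega
    obtain ⟨hv1, hv2⟩ := (mem_setA_iff T _).mp hmem
    have hlt1 : T.r2[r] < i + 1 := by
      rw [← hr2q]; exact hg2 r q hrlt hqlt (by omega)
    have hne : T.r2[r] ≠ i := fun h => hb (h ▸ List.getElem_mem hrlt)
    have hr1len : r < T.r1.length := by omega
    have hcolr : T.r1[r] < T.r2[r] := by
      have h := hcs r (by omega)
      rwa [List.getD_eq_getElem _ _ hr1len, List.getD_eq_getElem _ _ hrlt] at h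
    have hia : T.r1.idxOf (T.r2[r]) < p :=
      sorted_indexOf_lt hs1 hv1 ha (by omega)
    have hib : r < T.r1.idxOf (T.r2[r]) := by
      have h := sorted_indexOf_lt hs1 (List.getElem_mem hr1len) hv1 hcolr
      rwa [indexOf_getElem' hn1 hr1len] at h
    omega
  have hBi : (i+1) ∉ setB T := by
    intro h
    obtain ⟨r, hr, hA, he⟩ := (mem_setB_iff T _).mp h
    have hrq : r + 1 = q := hn2.getElem_inj_iff.mp (by rw [he, hr2q])
    exact haprev r hrq hA
  -- membership facts in Phi T
  have hiP1 : i ∈ (Phi T).r1 := by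
    simp only [Phi, List.mem_filter]
    exact ⟨ha, by simpa using hAi⟩
  have hi1P1 : (i+1) ∉ (Phi T).r1 := fun h => hd (List.mem_of_mem_filter h)
  have hi1P2 : (i+1) ∈ (Phi T).r2 := by
    simp only [Phi, List.mem_filter]
    exact ⟨hc, by simpa using hBi⟩
  have hsf1 : ((Phi T).r1).Pairwise (· < ·) :=
    List.Pairwise.sublist (List.filter_sublist) hs1
  have hsf2 : ((Phi T).r2).Pairwise (· < ·) :=
    List.Pairwise.sublist (List.filter_sublist) hs2
  have e1 : colIdx (Phi T) i
      = T.r1.countP (fun v => decide (v < i) && decide (v ∉ setA T)) := by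
    simp only [colIdx]
    rw [if_pos hiP1, sorted_indexOf hsf1 hiP1,
      show (Phi T).r1 = T.r1.filter (fun x => decide (x ∉ setA T)) from rfl,
      List.countP_filter]
  have e2 : colIdx (Phi T) (i+1)
      = T.r2.countP (fun v => decide (v < i+1) && decide (v ∉ setB T)) := by
    simp only [colIdx]
    rw [if_neg hi1P1, if_pos hi1P2, sorted_indexOf hsf2 hi1P2,
      show (Phi T).r2 = T.r2.filter (fun x => decide (x ∉ setB T)) from rfl,
      List.countP_filter]
  have t1 : T.r1.countP (fun v => decide (v < i)) = p := (sorted_indexOf hs1 ha).symm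
  have t2 : T.r2.countP (fun v => decide (v < i+1)) = q := (sorted_indexOf hs2 hc).symm
  have s1 : T.r1.countP (fun v => decide (v < i) && decide (v ∈ setA T))
      + T.r1.countP (fun v => decide (v < i) && !decide (v ∈ setA T))
      = T.r1.countP (fun v => decide (v < i)) :=
    countP_and_split T.r1 _ _
  have s2 : T.r2.countP (fun v => decide (v < i+1) && decide (v ∈ setB T))
      + T.r2.countP (fun v => decide (v < i+1) && !decide (v ∈ setB T))
      = T.r2.countP (fun v => decide (v < i+1)) :=
    countP_and_split T.r2 _ _
  -- the key count identity
  have c1 : T.r1.countP (fun v => decide (v < i) && decide (v ∈ setA T))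
      = T.r1.countP (fun v => decide (v < i) && decide (v ∈ T.r2)) :=
    List.countP_congr (fun v hv => by simp [mem_setA_iff T v, hv])
  have c2 := countP_comm_mem T.r1 T.r2 hn1 hn2 i
  have c3 : T.r2.countP (fun v => decide (v < i) && decide (v ∈ T.r1))
      = T.r2.countP (fun v => decide (v < i) && decide (v ∈ setA T)) :=
    List.countP_congr (fun v hv => by simp [mem_setA_iff T v, hv])
  have hr2ne : T.r2 ≠ [] := List.ne_nil_of_mem hc
  have hlast : ¬ (T.r2.getLast hr2ne < i) := by
    rw [List.getLast_eq_getElem]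
    have hlen : T.r2.length - 1 < T.r2.length := by omega
    rcases Nat.lt_or_ge q (T.r2.length - 1) with h | h
    · have := hg2 q (T.r2.length - 1) hqlt hlen h
      omega
    · have hq' : q = T.r2.length - 1 := by omega
      simp only [← hq', hr2q]
      omega
  have c4 : T.r2.countP (fun v => decide (v < i) && decide (v ∈ setA T))
      = T.r2.dropLast.countP (fun v => decide (v < i) && decide (v ∈ setA T)) := by
    conv_lhs => rw [← List.dropLast_append_getLast hr2ne]
    rw [List.countP_append]
    simp [hlast]
  set L := T.r2.zip T.r2.tail with hLdef
  have hfst : L.map Prod.fst = T.r2.dropLast := by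
    rw [hLdef, zip_tail_eq]
    apply List.map_fst_zip
    simp
  have hsnd : L.map Prod.snd = T.r2.tail := by
    apply List.map_snd_zip
    simp
  have hLmem : ∀ pr ∈ L, ∃ r, ∃ _h : r + 1 < T.r2.length,
      T.r2[r] = pr.1 ∧ T.r2[r+1] = pr.2 := by
    intro pr hpr
    obtain ⟨u, v⟩ := pr
    exact mem_zip_tail.mp hpr
  have c5 : T.r2.dropLast.countP (fun v => decide (v < i) && decide (v ∈ setA T))
      = L.countP (fun pr => decide (pr.1 < i) && decide (pr.1 ∈ setA T)) := by
    rw [← hfst, List.countP_map]; rfl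
  have c6 : L.countP (fun pr => decide (pr.1 < i) && decide (pr.1 ∈ setA T))
      = L.countP (fun pr => decide (pr.2 < i + 1) && decide (pr.1 ∈ setA T)) := by
    apply List.countP_congr
    intro pr hpr
    obtain ⟨r, hr, f1, f2⟩ := hLmem pr hpr
    simp only [Bool.and_eq_true, decide_eq_true_eq]
    constructor
    · rintro ⟨h1, h2⟩
      refine ⟨?_, h2⟩
      have hlt : T.r2[r] < T.r2[q] := by rw [f1, hr2q]; omega
      have hrq : r < q := by
        rcases Nat.lt_trichotomy r q with h | h | h
        · exact h
        · subst h; exact absurd hlt (lt_irrefl _)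
        · have := hg2 q r hqlt (by omega) h; omega
      have hr1q : r + 1 ≠ q := fun hh => haprev r hh (by rw [f1]; exact h2)
      have hlt2 : T.r2[r+1] < T.r2[q] := hg2 (r+1) q (by omega) hqlt (by omega)
      rw [f2] at hlt2
      rw [hr2q] at hlt2
      omega
    · rintro ⟨h1, h2⟩
      refine ⟨?_, h2⟩
      have hadj : pr.1 < pr.2 := by
        rw [← f1, ← f2]; exact hg2 r (r+1) (by omega) hr (by omega)
      omega
  have c7 : L.countP (fun pr => decide (pr.2 < i+1) && decide (pr.1 ∈ setA T))
      = L.countP (fun pr => decide (pr.2 < i+1) && decide (pr.2 ∈ setB T)) := by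
    apply List.countP_congr
    intro pr hpr
    obtain ⟨r, hr, f1, f2⟩ := hLmem pr hpr
    simp only [Bool.and_eq_true, decide_eq_true_eq]
    constructor
    · rintro ⟨h1, h2⟩
      exact ⟨h1, (mem_setB_iff T pr.2).mpr ⟨r, hr, by rw [f1]; exact h2, f2⟩⟩
    · rintro ⟨h1, h2⟩
      refine ⟨h1, ?_⟩
      obtain ⟨r', hr', hA', he'⟩ := (mem_setB_iff T pr.2).mp h2
      have hrr : r' = r := by
        have h12 : r' + 1 = r + 1 := hn2.getElem_inj_iff.mp (by rw [he', f2])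
        omega
      subst hrr
      rw [← f1]; exact hA'
  have c8 : L.countP (fun pr => decide (pr.2 < i+1) && decide (pr.2 ∈ setB T))
      = T.r2.tail.countP (fun v => decide (v < i+1) && decide (v ∈ setB T)) := by
    rw [← hsnd, List.countP_map]; rfl
  have hheadB : T.r2.head hr2ne ∉ setB T := by
    intro h
    obtain ⟨r, hr, _, he⟩ := (mem_setB_iff T _).mp h
    rw [List.head_eq_getElem] at he
    have h0 : r + 1 = 0 := hn2.getElem_inj_iff.mp (by rw [he])
    omega
  have c9 : T.r2.tail.countP (fun v => decide (v < i+1) && decide (v ∈ setB T))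
      = T.r2.countP (fun v => decide (v < i+1) && decide (v ∈ setB T)) := by
    conv_rhs => rw [← List.cons_head_tail hr2ne]
    rw [List.countP_cons]
    simp [hheadB]
  have key : T.r1.countP (fun v => decide (v < i) && decide (v ∈ setA T))
      = T.r2.countP (fun v => decide (v < i+1) && decide (v ∈ setB T)) := by
    rw [c1, c2, c3, c4, c5, c6, c7, c8, c9]
  rw [e1, e2]
  simp only [decide_not]
  omega

/-- If `i` occurs exactly once in row 1 of `T ∈ IGLT(λ)_m`, `i+1` occurs exactly once in
row 2, and they occupy the same column, then in `S = Φ_{λ;m}(T)` the entries `i` and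
`i+1` lie in the same column; hence `π_i · S = 0` under Searles' action, matching
`π_i · T = 0` for the Kim–Yoo action. -/
theorem stmt_11 (l1 l2 n m : ℕ) (h2 : 1 ≤ l2) (h12 : l2 ≤ l1) (hn : n = l1 + l2)
    (T : TwoRowT) (hT : IsIGLT l1 l2 m T)
    (i : ℕ) (hi1 : 1 ≤ i) (hi2 : i < m)
    (ha : i ∈ T.r1) (hb : i ∉ T.r2) (hc : i + 1 ∈ T.r2) (hd : i + 1 ∉ T.r1)
    (hcol : T.r1.idxOf i = T.r2.idxOf (i + 1)) :
    colIdx (Phi T) i = colIdx (Phi T) (i + 1) ∧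
    searlesStep i (Phi T) = none ∧
    kyStep i T = none := by
  refine ⟨main_col l1 l2 m T hT i ha hb hc hd hcol, ?_, ?_⟩
  · simp [searlesStep, main_col l1 l2 m T hT i ha hb hc hd hcol]
  · rw [kyStep, if_pos ⟨ha, hc⟩, if_neg]
    rintro ⟨-, -, hlt⟩
    omega
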